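/- Suppose that for every state i in {1,...,n} there exist d in {1,...,n} and an input j such that i is in the union of N_d^j and P_d^j and exactly one of the sets N_d^j, P_d^j is empty. Then the system is completely sign herdable: for every pair (A',B') with the same sign pattern as (A,B), the range of the controllability matrix of (A',B') contains an entrywise positive vector. -/

import Mathlib

/-- `k` is a walk of length `e + 1` from input `j` to state `i`: it visits the states
`k 0, k 1, …, k e`, ends at `i`, starts along a nonzero entry of `B`, and follows
nonzero entries of `A`. -/
def IsWalk {n m : ℕ} (A : Matrix (Fin n) (Fin n) ℝ) (B : Matrix (Fin n) (Fin m) ℝ)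
    (j : Fin m) (i : Fin n) {e : ℕ} (k : Fin (e + 1) → Fin n) : Prop :=
  k (Fin.last e) = i ∧ B (k 0) j ≠ 0 ∧ ∀ t : Fin e, A (k t.succ) (k t.castSucc) ≠ 0

/-- The weight of the walk `k 0, …, k e` from input `j`:
`B (k 0) j * ∏ₜ A (k (t+1)) (k t)`. -/
def walkWeight {n m : ℕ} (A : Matrix (Fin n) (Fin n) ℝ) (B : Matrix (Fin n) (Fin m) ℝ)
    (j : Fin m) {e : ℕ} (k : Fin (e + 1) → Fin n) : ℝ :=
  B (k 0) j * ∏ t : Fin e, A (k t.succ) (k t.castSucc)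

open Classical in
/-- `rho A B j i d` is the sum of the weights of all walks of length `d` from input `j`
to state `i` (zero if there are none, in particular for `d = 0`). -/
noncomputable def rho {n m : ℕ} (A : Matrix (Fin n) (Fin n) ℝ) (B : Matrix (Fin n) (Fin m) ℝ)
    (j : Fin m) (i : Fin n) : ℕ → ℝ
  | 0 => 0
  | e + 1 => ∑ k : Fin (e + 1) → Fin n,
      if IsWalk A B j i k then walkWeight A B j k else 0

/-- `Pset A B j d` is the set of states reachable from input `j` by at least one walk of
length `d` of positive weight. -/
def Pset {n m : ℕ} (A : Matrix (Fin n) (Fin n) ℝ) (B : Matrix (Fin n) (Fin m) ℝ)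
    (j : Fin m) : ℕ → Set (Fin n)
  | 0 => ∅
  | e + 1 => {i | ∃ k : Fin (e + 1) → Fin n, IsWalk A B j i k ∧ 0 < walkWeight A B j k}

/-- `Nset A B j d` is the set of states reachable from input `j` by at least one walk of
length `d` of negative weight. -/
def Nset {n m : ℕ} (A : Matrix (Fin n) (Fin n) ℝ) (B : Matrix (Fin n) (Fin m) ℝ)
    (j : Fin m) : ℕ → Set (Fin n)
  | 0 => ∅
  | e + 1 => {i | ∃ k : Fin (e + 1) → Fin n, IsWalk A B j i k ∧ walkWeight A B j k < 0}

/-- The controllability matrix `C = [B, AB, …, A^{n-1} B]`; the column indexed by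
`(d, j)` is the `j`-th column of `A^d B`. -/
def ctrb {n m : ℕ} (A : Matrix (Fin n) (Fin n) ℝ) (B : Matrix (Fin n) (Fin m) ℝ) :
    Matrix (Fin n) (Fin n × Fin m) ℝ := fun i p => (A ^ (p.1 : ℕ) * B) i p.2

/-- A vector is unisigned if all of its nonzero entries have the same sign. -/
def Unisigned {n : ℕ} (k : Fin n → ℝ) : Prop :=
  ∀ a b : Fin n, k a ≠ 0 → k b ≠ 0 → Real.sign (k a) = Real.sign (k b)

/-- State `i` is strictly herdable with respect to the pair `(A, B)`: there is a
unisigned vector `k` in the range of the controllability matrix with `k i ≠ 0`. -/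
def StrictlyHerdable {n m : ℕ} (A : Matrix (Fin n) (Fin n) ℝ)
    (B : Matrix (Fin n) (Fin m) ℝ) (i : Fin n) : Prop :=
  ∃ k : Fin n → ℝ, (∃ y : Fin n × Fin m → ℝ, (ctrb A B).mulVec y = k) ∧
    Unisigned k ∧ k i ≠ 0

/-- `(A', B')` has the same sign pattern as `(A, B)`. -/
def SamePattern {n m : ℕ} (A A' : Matrix (Fin n) (Fin n) ℝ)
    (B B' : Matrix (Fin n) (Fin m) ℝ) : Prop :=
  (∀ p q, Real.sign (A' p q) = Real.sign (A p q)) ∧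
    (∀ p q, Real.sign (B' p q) = Real.sign (B p q))

/-!
The `(i, j)` entry of `A ^ e * B` is the sum of the weights of the walks of length `e + 1` from
input `j` to state `i`, and the sign of each weight depends only on the sign pattern of `(A, B)`.
If `N_d^j` (resp. `P_d^j`) is empty, every walk of length `d` from `j` has positive (resp.
negative) weight, in every pair `(A', B')` with the same pattern. Then `±` the `j`-th column of
`A' ^ (d - 1) * B'` is a nonnegative vector in the range of the controllability matrix that is
positive at each state reached by such a walk. Summing one such vector per state gives an
entrywise positive vector in the range.
-/

theorem Submodule.exists_forall_pos_mem {ι R : Type*} [Fintype ι] [Semiring R] [PartialOrder R]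
    [IsOrderedCancelAddMonoid R] (S : Submodule R (ι → R))
    (h : ∀ i, ∃ v ∈ S, 0 ≤ v ∧ 0 < v i) : ∃ v ∈ S, ∀ i, 0 < v i := by
  choose v hvS hv0 hvi using h
  refine ⟨∑ i, v i, S.sum_mem fun i _ => hvS i, fun i => ?_⟩
  rw [Finset.sum_apply]
  exact Finset.sum_pos' (fun k _ => hv0 k i) ⟨i, Finset.mem_univ i, hvi i⟩

namespace Real

theorem sign_mul (x y : ℝ) : sign (x * y) = sign x * sign y := by
  rcases lt_trichotomy x 0 with hx | rfl | hx <;> rcases lt_trichotomy y 0 with hy | rfl | hy <;>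
    simp [sign_of_pos, sign_of_neg, sign_zero, *, mul_pos_of_neg_of_neg, mul_neg_of_neg_of_pos,
      mul_neg_of_pos_of_neg]

theorem sign_prod {ι : Type*} (s : Finset ι) (f : ι → ℝ) :
    sign (∏ i ∈ s, f i) = ∏ i ∈ s, sign (f i) := by
  induction s using Finset.cons_induction with
  | empty => simp [sign_one]
  | cons a s ha ih => simp [Finset.prod_cons, sign_mul, ih]

theorem sign_eq_one_iff {r : ℝ} : sign r = 1 ↔ 0 < r := by
  refine ⟨fun h => ?_, sign_of_pos⟩
  rcases lt_trichotomy r 0 with hr | rfl | hr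
  · rw [sign_of_neg hr] at h; norm_num at h
  · rw [sign_zero] at h; norm_num at h
  · exact hr

theorem pos_iff_of_sign_eq {x y : ℝ} (h : sign x = sign y) : 0 < x ↔ 0 < y := by
  rw [← sign_eq_one_iff, h, sign_eq_one_iff]

theorem ne_zero_iff_of_sign_eq {x y : ℝ} (h : sign x = sign y) : x ≠ 0 ↔ y ≠ 0 := by
  rw [Ne, ← sign_eq_zero_iff, h, sign_eq_zero_iff]

end Real

section Walks

variable {n m : ℕ} {A A' : Matrix (Fin n) (Fin n) ℝ} {B B' : Matrix (Fin n) (Fin m) ℝ}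
  {j : Fin m} {i : Fin n} {e : ℕ} {k : Fin (e + 1) → Fin n}

theorem isWalk_iff_walkWeight_ne_zero :
    IsWalk A B j i k ↔ k (Fin.last e) = i ∧ walkWeight A B j k ≠ 0 := by
  simp only [IsWalk, walkWeight, ne_eq, mul_eq_zero, Finset.prod_eq_zero_iff, Finset.mem_univ,
    true_and, not_or, not_exists]

theorem walkWeight_snoc (p : Fin n) :
    walkWeight A B j (Fin.snoc k p : Fin (e + 2) → Fin n) =
      walkWeight A B j k * A p (k (Fin.last e)) := by
  have h0 : (Fin.snoc k p : Fin (e + 2) → Fin n) 0 = k 0 := Fin.snoc_castSucc (i := 0) ..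
  simp only [walkWeight, h0, Fin.prod_univ_castSucc, Fin.succ_castSucc, Fin.snoc_castSucc,
    Fin.succ_last, Fin.snoc_last, mul_assoc]

-- Non-walks ending at `i` have weight zero, so `rho` may sum over all tuples ending at `i`.
theorem rho_succ :
    rho A B j i (e + 1) =
      ∑ k : Fin (e + 1) → Fin n, if k (Fin.last e) = i then walkWeight A B j k else 0 := by
  refine Finset.sum_congr rfl fun k _ => ?_
  by_cases hk : k (Fin.last e) = i
  · by_cases hw : walkWeight A B j k = 0 <;> simp [isWalk_iff_walkWeight_ne_zero, hk, hw]
  · simp [isWalk_iff_walkWeight_ne_zero, hk]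

theorem pow_mul_apply_eq_rho : (A ^ e * B) i j = rho A B j i (e + 1) := by
  induction e generalizing i with
  | zero =>
    rw [rho_succ, ← (Fin.snocEquiv fun _ => Fin n).sum_comp, Fintype.sum_prod_type]
    simp [walkWeight, Fin.snoc, Fin.last_zero]
  | succ e ih =>
    calc (A ^ (e + 1) * B) i j
        = ∑ k : Fin (e + 1) → Fin n, walkWeight A B j k * A i (k (Fin.last e)) := by
          rw [pow_succ', Matrix.mul_assoc, Matrix.mul_apply]
          simp only [ih, rho_succ, Finset.mul_sum, mul_ite, mul_zero]
          rw [Finset.sum_comm]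
          simp [mul_comm]
      _ = rho A B j i (e + 2) := by
          symm
          rw [rho_succ, ← (Fin.snocEquiv fun _ => Fin n).sum_comp, Fintype.sum_prod_type,
            Finset.sum_comm]
          simp only [Fin.snocEquiv, Equiv.coe_fn_mk, Fin.snoc_last, Finset.sum_ite_eq',
            Finset.mem_univ, if_true, walkWeight_snoc]

theorem rho_mem_range_ctrb (he : e < n) :
    (fun i => rho A B j i (e + 1)) ∈ LinearMap.range (ctrb A B).mulVecLin :=
  ⟨Pi.single (⟨e, he⟩, j) 1, by ext i; simp [ctrb, pow_mul_apply_eq_rho]⟩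

theorem SamePattern.sign_walkWeight (hs : SamePattern A A' B B') (j : Fin m)
    (k : Fin (e + 1) → Fin n) :
    Real.sign (walkWeight A' B' j k) = Real.sign (walkWeight A B j k) := by
  simp only [walkWeight, Real.sign_mul, Real.sign_prod, hs.1, hs.2]

theorem SamePattern.isWalk_iff (hs : SamePattern A A' B B') :
    IsWalk A' B' j i k ↔ IsWalk A B j i k := by
  rw [isWalk_iff_walkWeight_ne_zero, isWalk_iff_walkWeight_ne_zero,
    Real.ne_zero_iff_of_sign_eq (hs.sign_walkWeight j k)]

theorem SamePattern.mul_walkWeight_pos_iff (hs : SamePattern A A' B B') (ε : ℝ) :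
    0 < ε * walkWeight A' B' j k ↔ 0 < ε * walkWeight A B j k :=
  Real.pos_iff_of_sign_eq (by rw [Real.sign_mul, Real.sign_mul, hs.sign_walkWeight])

def WalksSigned (A : Matrix (Fin n) (Fin n) ℝ) (B : Matrix (Fin n) (Fin m) ℝ) (j : Fin m)
    (e : ℕ) (ε : ℝ) : Prop :=
  ∀ (i : Fin n) (k : Fin (e + 1) → Fin n), IsWalk A B j i k → 0 < ε * walkWeight A B j k

variable {ε : ℝ}

theorem WalksSigned.of_samePattern (h : WalksSigned A B j e ε) (hs : SamePattern A A' B B') :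
    WalksSigned A' B' j e ε := fun i k hk =>
  (hs.mul_walkWeight_pos_iff ε).2 (h i k (hs.isWalk_iff.1 hk))

theorem walksSigned_one_of_nset_eq_empty (h : Nset A B j (e + 1) = ∅) :
    WalksSigned A B j e 1 := by
  intro i k hk
  rw [one_mul]
  refine (isWalk_iff_walkWeight_ne_zero.1 hk).2.lt_or_gt.resolve_left fun hneg => ?_
  exact Set.eq_empty_iff_forall_notMem.1 h i ⟨k, hk, hneg⟩

theorem walksSigned_neg_one_of_pset_eq_empty (h : Pset A B j (e + 1) = ∅) :
    WalksSigned A B j e (-1) := by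
  intro i k hk
  rw [neg_one_mul, neg_pos]
  refine (isWalk_iff_walkWeight_ne_zero.1 hk).2.lt_or_gt.resolve_right fun hpos => ?_
  exact Set.eq_empty_iff_forall_notMem.1 h i ⟨k, hk, hpos⟩

theorem exists_isWalk_of_mem_union (hi : i ∈ Nset A B j (e + 1) ∪ Pset A B j (e + 1)) :
    ∃ k : Fin (e + 1) → Fin n, IsWalk A B j i k := by
  rcases hi with ⟨k, hk, -⟩ | ⟨k, hk, -⟩ <;> exact ⟨k, hk⟩

theorem WalksSigned.mul_rho_nonneg (h : WalksSigned A B j e ε) (i : Fin n) :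
    0 ≤ ε * rho A B j i (e + 1) := by
  rw [rho, Finset.mul_sum]
  refine Finset.sum_nonneg fun k _ => ?_
  split_ifs with hk
  exacts [(h i k hk).le, (mul_zero ε).ge]

theorem WalksSigned.mul_rho_pos (h : WalksSigned A B j e ε) (hk : IsWalk A B j i k) :
    0 < ε * rho A B j i (e + 1) := by
  rw [rho, Finset.mul_sum]
  refine Finset.sum_pos' (fun k _ => ?_) ⟨k, Finset.mem_univ k, by rw [if_pos hk]; exact h i k hk⟩
  split_ifs with hk
  exacts [(h i k hk).le, (mul_zero ε).ge]

theorem WalksSigned.exists_mem_range_ctrb (h : WalksSigned A B j e ε) (he : e < n)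
    (hk : IsWalk A B j i k) : ∃ v ∈ LinearMap.range (ctrb A B).mulVecLin, 0 ≤ v ∧ 0 < v i :=
  ⟨ε • fun i' => rho A B j i' (e + 1), Submodule.smul_mem _ ε (rho_mem_range_ctrb he),
    h.mul_rho_nonneg, h.mul_rho_pos hk⟩

end Walks

/-- If for every state `i` there are `d ∈ {1,…,n}` and an input `j` such that
`i ∈ N_d^j ∪ P_d^j` and exactly one of `N_d^j`, `P_d^j` is empty, then the system is
completely sign herdable: for every pair with the same sign pattern, the range of its
controllability matrix contains an entrywise positive vector. -/
theorem completelySignHerdable_of_unisigned_walks {n m : ℕ}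
    (A : Matrix (Fin n) (Fin n) ℝ) (B : Matrix (Fin n) (Fin m) ℝ)
    (h : ∀ i : Fin n, ∃ (d : ℕ) (j : Fin m), 1 ≤ d ∧ d ≤ n ∧
      i ∈ Nset A B j d ∪ Pset A B j d ∧
      Xor' (Nset A B j d = ∅) (Pset A B j d = ∅)) :
    ∀ (A' : Matrix (Fin n) (Fin n) ℝ) (B' : Matrix (Fin n) (Fin m) ℝ),
      SamePattern A A' B B' →
      ∃ k : Fin n → ℝ, (∃ y : Fin n × Fin m → ℝ, (ctrb A' B').mulVec y = k) ∧
        ∀ i : Fin n, 0 < k i := by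
  intro A' B' hs
  obtain ⟨k, ⟨y, rfl⟩, hk⟩ := Submodule.exists_forall_pos_mem
    (LinearMap.range (ctrb A' B').mulVecLin) fun i => by
      obtain ⟨d, j, hd1, hdn, hi, hNP⟩ := h i
      obtain ⟨e, rfl⟩ : ∃ e, d = e + 1 := ⟨d - 1, by omega⟩
      obtain ⟨ε, hε⟩ : ∃ ε, WalksSigned A B j e ε := by
        rcases hNP with ⟨hN, -⟩ | ⟨hP, -⟩
        exacts [⟨1, walksSigned_one_of_nset_eq_empty hN⟩,
          ⟨-1, walksSigned_neg_one_of_pset_eq_empty hP⟩]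
      obtain ⟨k, hk⟩ := exists_isWalk_of_mem_union hi
      exact (hε.of_samePattern hs).exists_mem_range_ctrb hdn (hs.isWalk_iff.2 hk)
  exact ⟨_, ⟨y, rfl⟩, hk⟩
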